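/- In the five-player cycle graph game, suppose players 2 and 3 answer according to the PR-box distribution q_PR(a_2,a_3|x_2,x_3) = 1/2 if a_2 ⊕ a_3 = x_2 ∧ x_3 and 0 otherwise, while players 1, 4 and 5 answer according to arbitrary deterministic functions f_1, f_4, f_5 : {0,1} → {0,1} of their own inputs. Then the players lose question Q_1 with probability exactly 1/2 and lose question Q_4 with probability exactly 1/2; consequently, over a uniformly chosen question among the six, the winning probability is at most 5/6. -/
import Mathlib


/-- Inputs of the six questions of the five-player cycle graph game:
`none` is the question `Q_a` (all inputs 1), `some i` is the question `Q_i`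
(player `i` gets input 1, all others 0). -/
abbrev fiveCycleInput : Option (ZMod 5) → ZMod 5 → ZMod 2
  | none => fun _ => 1
  | some i => fun j => if j = i then 1 else 0

/-- The outputs `a` win question `q` of the five-player cycle graph game. -/
abbrev fiveCycleWinsOut : Option (ZMod 5) → (ZMod 5 → ZMod 2) → Prop
  | none, a => (∑ i : ZMod 5, a i) = 1
  | some i, a => a (i - 1) + a i + a (i + 1) = 0

/-- The PR-box distribution: `a₂ ⊕ a₃ = x₂ ∧ x₃` with probability `1/2` each. -/
noncomputable abbrev prBoxPR (a₂ a₃ x₂ x₃ : ZMod 2) : ℝ :=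
  if a₂ + a₃ = x₂ * x₃ then 1 / 2 else 0

/-- The full output vector when players 2 and 3 output `a₂, a₃` (from the box)
and players 1, 4, 5 answer deterministically via `f₁, f₄, f₅`. -/
abbrev prOutputs (f₁ f₄ f₅ : ZMod 2 → ZMod 2) (Q : Option (ZMod 5))
    (a₂ a₃ : ZMod 2) : ZMod 5 → ZMod 2 :=
  fun j =>
    if j = 1 then f₁ (fiveCycleInput Q 1)
    else if j = 2 then a₂
    else if j = 3 then a₃
    else if j = 4 then f₄ (fiveCycleInput Q 4)
    else f₅ (fiveCycleInput Q 5)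

lemma univ2 : (Finset.univ : Finset (ZMod 2)) = {0, 1} := by decide
lemma univ5 : (Finset.univ : Finset (ZMod 5)) = {0, 1, 2, 3, 4} := by decide

lemma zmod2_cases : ∀ z : ZMod 2, z = 0 ∨ z = 1 := by decide

open Classical in
lemma prBox_total (x y : ZMod 2) :
    (∑ a₂ : ZMod 2, ∑ a₃ : ZMod 2, prBoxPR a₂ a₃ x y) = 1 := by
  rcases zmod2_cases x with hx|hx <;> rcases zmod2_cases y with hy|hy <;> subst hx hy <;>
  · simp only [univ2, prBoxPR, Finset.sum_insert, Finset.mem_singleton, Finset.sum_singleton]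
    simp (config := { decide := true })
    norm_num

open Classical in
lemma winS_le_one (f₁ f₄ f₅ : ZMod 2 → ZMod 2) (Q : Option (ZMod 5)) :
    (∑ a₂ : ZMod 2, ∑ a₃ : ZMod 2,
        prBoxPR a₂ a₃ (fiveCycleInput Q 2) (fiveCycleInput Q 3) *
        (if fiveCycleWinsOut Q (prOutputs f₁ f₄ f₅ Q a₂ a₃) then (1 : ℝ) else 0)) ≤ 1 := by
  calc (∑ a₂ : ZMod 2, ∑ a₃ : ZMod 2,
        prBoxPR a₂ a₃ (fiveCycleInput Q 2) (fiveCycleInput Q 3) *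
        (if fiveCycleWinsOut Q (prOutputs f₁ f₄ f₅ Q a₂ a₃) then (1 : ℝ) else 0))
      ≤ ∑ a₂ : ZMod 2, ∑ a₃ : ZMod 2, prBoxPR a₂ a₃ (fiveCycleInput Q 2) (fiveCycleInput Q 3) := by
        refine Finset.sum_le_sum fun a₂ _ => Finset.sum_le_sum fun a₃ _ => ?_
        have h0 : (0:ℝ) ≤ prBoxPR a₂ a₃ (fiveCycleInput Q 2) (fiveCycleInput Q 3) := by
          unfold prBoxPR; split <;> norm_num
        have h1 : (if fiveCycleWinsOut Q (prOutputs f₁ f₄ f₅ Q a₂ a₃) then (1 : ℝ) else 0) ≤ 1 := by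
          split <;> norm_num
        calc prBoxPR a₂ a₃ (fiveCycleInput Q 2) (fiveCycleInput Q 3) *
              (if fiveCycleWinsOut Q (prOutputs f₁ f₄ f₅ Q a₂ a₃) then (1 : ℝ) else 0)
            ≤ prBoxPR a₂ a₃ (fiveCycleInput Q 2) (fiveCycleInput Q 3) * 1 :=
              mul_le_mul_of_nonneg_left h1 h0
          _ = _ := mul_one _
    _ = 1 := prBox_total _ _

open Classical in
lemma loseS_one (f₁ f₄ f₅ : ZMod 2 → ZMod 2) :
    (∑ a₂ : ZMod 2, ∑ a₃ : ZMod 2,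
        prBoxPR a₂ a₃ (fiveCycleInput (some 1) 2) (fiveCycleInput (some 1) 3) *
        (if fiveCycleWinsOut (some 1) (prOutputs f₁ f₄ f₅ (some 1) a₂ a₃)
          then (0 : ℝ) else 1)) = 1 / 2 := by
  rcases zmod2_cases (f₁ 1) with h|h <;> rcases zmod2_cases (f₅ 0) with h5|h5 <;>
  · simp only [univ2, prOutputs, prBoxPR, fiveCycleInput, fiveCycleWinsOut,
      Finset.sum_insert, Finset.mem_singleton, Finset.sum_singleton, h, h5]
    simp (config := { decide := true }) [h, h5]

open Classical in
lemma loseS_four (f₁ f₄ f₅ : ZMod 2 → ZMod 2) :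
    (∑ a₂ : ZMod 2, ∑ a₃ : ZMod 2,
        prBoxPR a₂ a₃ (fiveCycleInput (some 4) 2) (fiveCycleInput (some 4) 3) *
        (if fiveCycleWinsOut (some 4) (prOutputs f₁ f₄ f₅ (some 4) a₂ a₃)
          then (0 : ℝ) else 1)) = 1 / 2 := by
  rcases zmod2_cases (f₄ 1) with h|h <;> rcases zmod2_cases (f₅ 0) with h5|h5 <;>
  · simp only [univ2, prOutputs, prBoxPR, fiveCycleInput, fiveCycleWinsOut,
      Finset.sum_insert, Finset.mem_singleton, Finset.sum_singleton, h, h5]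
    simp (config := { decide := true }) [h, h5]

open Classical in
lemma winS_one' (f₁ f₄ f₅ : ZMod 2 → ZMod 2) (Q : Option (ZMod 5)) (hQ : Q = some 1) :
    (∑ a₂ : ZMod 2, ∑ a₃ : ZMod 2,
        prBoxPR a₂ a₃ (fiveCycleInput Q 2) (fiveCycleInput Q 3) *
        (if fiveCycleWinsOut Q (prOutputs f₁ f₄ f₅ Q a₂ a₃) then (1 : ℝ) else 0)) = 1 / 2 := by
  subst hQ
  rcases zmod2_cases (f₁ 1) with h|h <;> rcases zmod2_cases (f₅ 0) with h5|h5 <;>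
  · simp only [univ2, prOutputs, prBoxPR, fiveCycleInput, fiveCycleWinsOut,
      Finset.sum_insert, Finset.mem_singleton, Finset.sum_singleton, h, h5]
    simp (config := { decide := true }) [h, h5]

open Classical in
lemma winS_four' (f₁ f₄ f₅ : ZMod 2 → ZMod 2) (Q : Option (ZMod 5)) (hQ : Q = some 4) :
    (∑ a₂ : ZMod 2, ∑ a₃ : ZMod 2,
        prBoxPR a₂ a₃ (fiveCycleInput Q 2) (fiveCycleInput Q 3) *
        (if fiveCycleWinsOut Q (prOutputs f₁ f₄ f₅ Q a₂ a₃) then (1 : ℝ) else 0)) = 1 / 2 := by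
  subst hQ
  rcases zmod2_cases (f₄ 1) with h|h <;> rcases zmod2_cases (f₅ 0) with h5|h5 <;>
  · simp only [univ2, prOutputs, prBoxPR, fiveCycleInput, fiveCycleWinsOut,
      Finset.sum_insert, Finset.mem_singleton, Finset.sum_singleton, h, h5]
    simp (config := { decide := true }) [h, h5]

open Classical in
/-- If players 2 and 3 answer according to the PR box while players 1, 4 and 5
answer deterministically, then questions `Q_1` and `Q_4` are each lost with
probability exactly `1/2`, and the winning probability over a uniform question
is at most `5/6`. -/
theorem fiveCycle_prBox_loses
    (f₁ f₄ f₅ : ZMod 2 → ZMod 2) :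
    (∑ a₂ : ZMod 2, ∑ a₃ : ZMod 2,
        prBoxPR a₂ a₃ (fiveCycleInput (some 1) 2) (fiveCycleInput (some 1) 3) *
        (if fiveCycleWinsOut (some 1) (prOutputs f₁ f₄ f₅ (some 1) a₂ a₃)
          then (0 : ℝ) else 1)) = 1 / 2 ∧
    (∑ a₂ : ZMod 2, ∑ a₃ : ZMod 2,
        prBoxPR a₂ a₃ (fiveCycleInput (some 4) 2) (fiveCycleInput (some 4) 3) *
        (if fiveCycleWinsOut (some 4) (prOutputs f₁ f₄ f₅ (some 4) a₂ a₃)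
          then (0 : ℝ) else 1)) = 1 / 2 ∧
    (1 / 6 : ℝ) * ∑ Q : Option (ZMod 5), ∑ a₂ : ZMod 2, ∑ a₃ : ZMod 2,
        prBoxPR a₂ a₃ (fiveCycleInput Q 2) (fiveCycleInput Q 3) *
        (if fiveCycleWinsOut Q (prOutputs f₁ f₄ f₅ Q a₂ a₃) then (1 : ℝ) else 0)
      ≤ 5 / 6 := by
  refine ⟨loseS_one f₁ f₄ f₅, loseS_four f₁ f₄ f₅, ?_⟩
  have hb := winS_le_one f₁ f₄ f₅
  have h1 := winS_one' f₁ f₄ f₅ (some 1) rfl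
  have h4 := winS_four' f₁ f₄ f₅ (some 4) rfl
  rw [Fintype.sum_option, univ5, Finset.sum_insert (by decide), Finset.sum_insert (by decide),
    Finset.sum_insert (by decide), Finset.sum_insert (by decide), Finset.sum_singleton]
  have b0 := hb none
  have b1 := hb (some 0)
  have b2 := hb (some 2)
  have b3 := hb (some 3)
  linarith
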